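/- arXiv:0911.4477 — 2 statements merged into one kernel-verified Lean document; each statement's English description precedes it below -/
import Mathlib

section
/- Let n ≥ 3 be an integer and let v : ℝ → ℝ be a twice differentiable function with v(t) > 0 for all t ∈ ℝ satisfying the Delaunay ODE v''(t) − ((n−2)²/4)·v(t) + (n·(n−2)/4)·v(t)^((n+2)/(n−2)) = 0 for all t ∈ ℝ, and assume H(v(0), v'(0)) ≤ 0. Then for every t ∈ ℝ one has v(t) ≤ v(0)·exp(((n−2)/2)·|t|). -/
/-!
The energy `H(v, v')` is a first integral of the Delaunay ODE, so `H ≤ 0` holds along the whole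
solution. Since the `v^(2n/(n-2))` term of `H` is nonnegative, this forces
`|v'| ≤ ((n-2)/2) v`, i.e. `log v` is `((n-2)/2)`-Lipschitz, which integrates to the
exponential bound.
-/

/-- The Hamiltonian energy of the Delaunay ODE:
`H(v, w) = w² − ((n−2)²/4)·v² + ((n−2)²/4)·v^(2n/(n−2))`. -/
noncomputable def delaunayH (n : ℕ) (v w : ℝ) : ℝ :=
  w ^ 2 - (((n : ℝ) - 2) ^ 2 / 4) * v ^ 2
    + (((n : ℝ) - 2) ^ 2 / 4) * v ^ (2 * (n : ℝ) / ((n : ℝ) - 2))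

open Real

theorem hasDerivAt_delaunayH_comp (n : ℕ) {v w : ℝ → ℝ} {v' w' t : ℝ}
    (hv : HasDerivAt v v' t) (hw : HasDerivAt w w' t) (hpos : 0 < v t) :
    HasDerivAt (fun s => delaunayH n (v s) (w s))
      (2 * w t * w' - (((n : ℝ) - 2) ^ 2 / 4) * (2 * v t * v')
        + (((n : ℝ) - 2) ^ 2 / 4) * (v' * (2 * n / ((n : ℝ) - 2))
          * v t ^ (2 * (n : ℝ) / ((n : ℝ) - 2) - 1))) t := by
  have hw2 : HasDerivAt (fun s => w s ^ 2) (2 * w t * w') t := by simpa using hw.fun_pow 2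
  have hv2 : HasDerivAt (fun s => v s ^ 2) (2 * v t * v') t := by simpa using hv.fun_pow 2
  exact (hw2.sub (hv2.const_mul _)).add
    ((hv.rpow_const (p := 2 * (n : ℝ) / ((n : ℝ) - 2)) (Or.inl hpos.ne')).const_mul _)

theorem delaunayH_comp_eq_of_ode {n : ℕ} (hn : n ≠ 2) {v : ℝ → ℝ}
    (hv : Differentiable ℝ v) (hv' : Differentiable ℝ (deriv v))
    (hpos : ∀ t : ℝ, 0 < v t)
    (hode : ∀ t : ℝ, deriv (deriv v) t - (((n : ℝ) - 2) ^ 2 / 4) * v t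
      + ((n : ℝ) * ((n : ℝ) - 2) / 4) * v t ^ (((n : ℝ) + 2) / ((n : ℝ) - 2)) = 0)
    (t s : ℝ) :
    delaunayH n (v t) (deriv v t) = delaunayH n (v s) (deriv v s) := by
  have hn2 : (n : ℝ) - 2 ≠ 0 := sub_ne_zero.mpr (by exact_mod_cast hn)
  have hexp : 2 * (n : ℝ) / ((n : ℝ) - 2) - 1 = ((n : ℝ) + 2) / ((n : ℝ) - 2) := by
    field_simp
    ring
  have hderiv : ∀ t, HasDerivAt (fun s => delaunayH n (v s) (deriv v s)) 0 t := by
    intro t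
    convert hasDerivAt_delaunayH_comp n (hv t).hasDerivAt (hv' t).hasDerivAt (hpos t) using 1
    have hv'' : deriv (deriv v) t = ((n : ℝ) - 2) ^ 2 / 4 * v t
        - (n : ℝ) * ((n : ℝ) - 2) / 4 * v t ^ (((n : ℝ) + 2) / ((n : ℝ) - 2)) := by
      linarith [hode t]
    rw [hexp, hv'']
    field_simp
    ring
  exact is_const_of_deriv_eq_zero (fun x => (hderiv x).differentiableAt)
    (fun x => (hderiv x).deriv) t s

theorem abs_le_of_delaunayH_nonpos {n : ℕ} (hn : 2 ≤ n) {v w : ℝ} (hv : 0 ≤ v)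
    (hH : delaunayH n v w ≤ 0) : |w| ≤ ((n : ℝ) - 2) / 2 * v := by
  have hn2 : (0 : ℝ) ≤ (n : ℝ) - 2 := sub_nonneg.mpr (by exact_mod_cast hn)
  have hvq := rpow_nonneg hv (2 * (n : ℝ) / ((n : ℝ) - 2))
  unfold delaunayH at hH
  refine abs_le_of_sq_le_sq ?_ (by positivity)
  nlinarith [mul_nonneg (by positivity : (0 : ℝ) ≤ ((n : ℝ) - 2) ^ 2 / 4) hvq]

theorem le_mul_exp_of_abs_deriv_le {v : ℝ → ℝ} {k : ℝ} (hv : Differentiable ℝ v)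
    (hpos : ∀ t, 0 < v t) (hbound : ∀ t, |deriv v t| ≤ k * v t) (t s : ℝ) :
    v t ≤ v s * exp (k * |t - s|) := by
  have hlog : ∀ x, HasDerivAt (fun y => log (v y)) (deriv v x / v x) x :=
    fun x => (hv x).hasDerivAt.log (hpos x).ne'
  have hlog_le : ∀ x, ‖deriv v x / v x‖ ≤ k := fun x => by
    rw [norm_div, norm_of_nonneg (hpos x).le, div_le_iff₀ (hpos x)]
    exact hbound x
  have hlip : ‖log (v t) - log (v s)‖ ≤ k * ‖t - s‖ :=
    convex_univ.norm_image_sub_le_of_norm_hasDerivWithin_le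
      (fun x _ => (hlog x).hasDerivWithinAt) (fun x _ => hlog_le x) (Set.mem_univ s)
      (Set.mem_univ t)
  rw [norm_eq_abs, norm_eq_abs] at hlip
  calc v t = exp (log (v t)) := (exp_log (hpos t)).symm
    _ ≤ exp (log (v s) + k * |t - s|) :=
      exp_le_exp.mpr (by linarith [le_abs_self (log (v t) - log (v s))])
    _ = v s * exp (k * |t - s|) := by rw [exp_add, exp_log (hpos s)]

theorem stmt_3 (n : ℕ) (hn : 3 ≤ n) (v : ℝ → ℝ)
    (hv : Differentiable ℝ v) (hv' : Differentiable ℝ (deriv v))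
    (hpos : ∀ t : ℝ, 0 < v t)
    (hode : ∀ t : ℝ, deriv (deriv v) t - (((n : ℝ) - 2) ^ 2 / 4) * v t
      + ((n : ℝ) * ((n : ℝ) - 2) / 4) * v t ^ (((n : ℝ) + 2) / ((n : ℝ) - 2)) = 0)
    (hH : delaunayH n (v 0) (deriv v 0) ≤ 0) :
    ∀ t : ℝ, v t ≤ v 0 * Real.exp ((((n : ℝ) - 2) / 2) * |t|) := by
  have hH_all : ∀ t, delaunayH n (v t) (deriv v t) ≤ 0 := fun t =>
    (delaunayH_comp_eq_of_ode (by omega) hv hv' hpos hode t 0).trans_le hH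
  intro t
  simpa using le_mul_exp_of_abs_deriv_le hv hpos
    (fun s => abs_le_of_delaunayH_nonpos (by omega) (hpos s).le (hH_all s)) t 0
end

section
/- Let n ≥ 2 be an integer, let r > 0, and let F, G be real numbers with S := G + (n−1)·F > 0. Let A, W, B, B' > 0, set D = {(a, ω) ∈ ℝ × ℝ : |a| ≤ A and |ω| ≤ W}, and let H, H' : ℝ × ℝ → ℝ be continuous functions with |H(a,ω)| ≤ B and |H'(a,ω)| ≤ B' for all (a, ω) ∈ D. If (B' + (n−1)·B)/(S·r) ≤ A and |F|·(B' + (n−1)·B)/S + B ≤ W, then there exists (a, ω) ∈ D such that F·r·a − ω = H(a,ω) and G·r·a − (1−n)·ω = H'(a,ω). -/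
/-!
A solution is a fixed point of `(a, ω) ↦ (X / (S r), F X / S - H)` with `X = H' + (n - 1) H`:
the first component gives `S r a = X`, and then the second equation is `X - (n - 1) H = H'`.
The two bounds on `A` and `W` say that this map sends the rectangle `D` into itself, so Brouwer's
theorem for rectangles applies.

Brouwer's theorem for a rectangle follows from the Poincaré–Miranda theorem for `φ - id`, which
is proved with Sperner's lemma. Label the points of a fine grid by the signs of the components of
`f`. Summing over all cells the number, mod 2, of boundary edges labelled `{0, 1}` (doors) leaves
only the doors on the boundary of the rectangle, and there are an odd number of them; a cell with an
odd number of doors carries all three labels. By uniform continuity such a cell contains an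
approximate zero of `f`, and by compactness `f` has a zero.
-/

open Set

def door (u v : Fin 3) : ZMod 2 := if (u = 0 ∧ v = 1) ∨ (u = 1 ∧ v = 0) then 1 else 0

lemma door_eq_zero_of_ne_zero {u v : Fin 3} (hu : u ≠ 0) (hv : v ≠ 0) : door u v = 0 := by
  revert u v; decide

lemma door_eq_zero_of_ne_one {u v : Fin 3} (hu : u ≠ 1) (hv : v ≠ 1) : door u v = 0 := by
  revert u v; decide

lemma door_eq_sub_of_ne_two {u v : Fin 3} (hu : u ≠ 2) (hv : v ≠ 2) :
    door u v = (if v = 1 then 1 else 0) - (if u = 1 then 1 else 0) := by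
  revert u v; decide

-- `a, b, c, d` are the labels at `(i, j), (i + 1, j), (i, j + 1), (i + 1, j + 1)`; the signs,
-- irrelevant mod 2, make the sum over all cells telescope. Around a cycle avoiding the label `2`
-- the labels switch between `0` and `1` an even number of times.
lemma forall_eq_of_door_boundary_ne_zero {a b c d : Fin 3}
    (h : door c d - door a b + (door b d - door a c) ≠ 0) (k : Fin 3) :
    k = a ∨ k = b ∨ k = c ∨ k = d := by
  revert a b c d k; decide

lemma sum_range_door_of_ne_two {N : ℕ} (l : ℕ → Fin 3) (h : ∀ i ≤ N, l i ≠ 2) :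
    ∑ i ∈ Finset.range N, door (l i) (l (i + 1)) =
      (if l N = 1 then 1 else 0) - (if l 0 = 1 then 1 else 0) := by
  rw [← Finset.sum_range_sub (fun i => if l i = 1 then (1 : ZMod 2) else 0)]
  exact Finset.sum_congr rfl fun i hi =>
    door_eq_sub_of_ne_two (h i (Finset.mem_range.1 hi).le) (h (i + 1) (Finset.mem_range.1 hi))

theorem exists_fully_labelled_cell {N : ℕ} (l : ℕ → ℕ → Fin 3)
    (hleft : ∀ j ≤ N, l 0 j = 0) (hright : ∀ j ≤ N, l N j ≠ 0)
    (hbot : ∀ i ≤ N, l i 0 ≠ 2) (htop : ∀ i ≤ N, l i N ≠ 1) :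
    ∃ i < N, ∃ j < N, ∀ k, ∃ i' ∈ Icc i (i + 1), ∃ j' ∈ Icc j (j + 1), l i' j' = k := by
  set X : ℕ → ℕ → ZMod 2 := fun i j => door (l i j) (l (i + 1) j)
  set Y : ℕ → ℕ → ZMod 2 := fun i j => door (l i j) (l i (j + 1))
  have hcorner : l N 0 = 1 := by
    have h₀ := hright 0 N.zero_le
    have h₂ := hbot N le_rfl
    generalize l N 0 = u at h₀ h₂
    revert u; decide
  have hbottom : ∑ i ∈ Finset.range N, X i 0 = 1 := by
    rw [sum_range_door_of_ne_two (l · 0) hbot, hcorner, hleft 0 N.zero_le]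
    decide
  have htop' : ∀ i ∈ Finset.range N, X i N = 0 := fun i hi =>
    door_eq_zero_of_ne_one (htop i (Finset.mem_range.1 hi).le)
      (htop (i + 1) (Finset.mem_range.1 hi))
  have hsides : ∀ j ∈ Finset.range N, Y N j - Y 0 j = 0 := fun j hj => by
    have hj : j + 1 ≤ N := Finset.mem_range.1 hj
    simp only [Y, hleft j (by omega), hleft (j + 1) hj,
      door_eq_zero_of_ne_zero (hright j (by omega)) (hright (j + 1) hj)]
    decide
  have htotal : ∑ i ∈ Finset.range N, ∑ j ∈ Finset.range N,
      (X i (j + 1) - X i j + (Y (i + 1) j - Y i j)) = 1 := by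
    simp only [Finset.sum_add_distrib, Finset.sum_range_sub]
    rw [Finset.sum_comm, Finset.sum_congr rfl fun j _ => Finset.sum_range_sub (Y · j) N,
      Finset.sum_congr rfl hsides, Finset.sum_const_zero, add_zero, Finset.sum_sub_distrib,
      Finset.sum_congr rfl htop', Finset.sum_const_zero, hbottom]
    decide
  obtain ⟨i, hi, hi'⟩ := Finset.exists_ne_zero_of_sum_ne_zero (htotal ▸ one_ne_zero)
  obtain ⟨j, hj, hij⟩ := Finset.exists_ne_zero_of_sum_ne_zero hi'
  refine ⟨i, Finset.mem_range.1 hi, j, Finset.mem_range.1 hj, fun k => ?_⟩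
  rcases forall_eq_of_door_boundary_ne_zero hij k with h | h | h | h
  · exact ⟨i, by simp, j, by simp, h.symm⟩
  · exact ⟨i + 1, by simp, j, by simp, h.symm⟩
  · exact ⟨i, by simp, j + 1, by simp, h.symm⟩
  · exact ⟨i + 1, by simp, j + 1, by simp, h.symm⟩

noncomputable def gridCoord (x y : ℝ) (N i : ℕ) : ℝ := x + i / N * (y - x)

lemma gridCoord_zero (x y : ℝ) (N : ℕ) : gridCoord x y N 0 = x := by
  simp [gridCoord]

lemma gridCoord_self (x y : ℝ) {N : ℕ} (hN : N ≠ 0) : gridCoord x y N N = y := by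
  simp [gridCoord, hN]

lemma gridCoord_mem_Icc {x y : ℝ} (hxy : x ≤ y) {N i : ℕ} (hi : i ≤ N) :
    gridCoord x y N i ∈ Icc x y := by
  have h0 : (0 : ℝ) ≤ i / N := by positivity
  have h1 : (i : ℝ) / N ≤ 1 := div_le_one_of_le₀ (by exact_mod_cast hi) N.cast_nonneg
  constructor <;> unfold gridCoord <;> nlinarith

lemma abs_gridCoord_sub_le {x y : ℝ} (hxy : x ≤ y) {N i i' i'' : ℕ}
    (hi' : i' ∈ Icc i (i + 1)) (hi'' : i'' ∈ Icc i (i + 1)) :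
    |gridCoord x y N i' - gridCoord x y N i''| ≤ (y - x) / N := by
  obtain ⟨h₁, h₂⟩ := hi'
  obtain ⟨h₃, h₄⟩ := hi''
  have hdiff : |(i' : ℝ) - i''| ≤ 1 := abs_sub_le_iff.2
    ⟨sub_left_le_of_le_add (by exact_mod_cast (by omega : i' ≤ i'' + 1)),
     sub_left_le_of_le_add (by exact_mod_cast (by omega : i'' ≤ i' + 1))⟩
  calc |gridCoord x y N i' - gridCoord x y N i''| = |(i' : ℝ) - i''| * ((y - x) / N) := by
        rw [← abs_of_nonneg (by positivity : 0 ≤ (y - x) / N), ← abs_mul, gridCoord, gridCoord]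
        ring_nf
    _ ≤ (y - x) / N := mul_le_of_le_one_left (by positivity) hdiff

theorem exists_fully_labelled_near {a b : ℝ × ℝ} (hab : a ≤ b) (L : ℝ × ℝ → Fin 3)
    (hleft : ∀ p ∈ Icc a b, p.1 = a.1 → L p = 0)
    (hright : ∀ p ∈ Icc a b, p.1 = b.1 → L p ≠ 0)
    (hbot : ∀ p ∈ Icc a b, p.2 = a.2 → L p ≠ 2)
    (htop : ∀ p ∈ Icc a b, p.2 = b.2 → L p ≠ 1) {δ : ℝ} (hδ : 0 < δ) :
    ∃ p : Fin 3 → ℝ × ℝ, ∀ k, p k ∈ Icc a b ∧ L (p k) = k ∧ ∀ k', dist (p k) (p k') < δ := by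
  obtain ⟨N, hN⟩ := exists_nat_gt (max (b.1 - a.1) (b.2 - a.2) / δ)
  have hN₀ : (0 : ℝ) < N :=
    lt_of_le_of_lt (div_nonneg (le_max_of_le_left (sub_nonneg.2 hab.1)) hδ.le) hN
  have hmesh : max (b.1 - a.1) (b.2 - a.2) / N < δ := by
    rw [div_lt_iff₀ hδ] at hN
    rwa [div_lt_iff₀ hN₀, mul_comm]
  have hN_ne : N ≠ 0 := by exact_mod_cast hN₀.ne'
  set P : ℕ → ℕ → ℝ × ℝ := fun i j => (gridCoord a.1 b.1 N i, gridCoord a.2 b.2 N j)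
  have hP : ∀ i ≤ N, ∀ j ≤ N, P i j ∈ Icc a b := fun i hi j hj => by
    rw [Icc_prod_eq]
    exact ⟨gridCoord_mem_Icc hab.1 hi, gridCoord_mem_Icc hab.2 hj⟩
  obtain ⟨i, hi, j, hj, hcell⟩ := exists_fully_labelled_cell (fun i j => L (P i j))
    (fun j hj => hleft _ (hP 0 N.zero_le j hj) (gridCoord_zero _ _ _))
    (fun j hj => hright _ (hP N le_rfl j hj) (gridCoord_self _ _ hN_ne))
    (fun i hi => hbot _ (hP i hi 0 N.zero_le) (gridCoord_zero _ _ _))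
    (fun i hi => htop _ (hP i hi N le_rfl) (gridCoord_self _ _ hN_ne))
  choose i' hi' j' hj' hl using hcell
  refine ⟨fun k => P (i' k) (j' k), fun k =>
    ⟨hP _ ((hi' k).2.trans hi) _ ((hj' k).2.trans hj), hl k, fun k' => ?_⟩⟩
  rw [Prod.dist_eq, Real.dist_eq, Real.dist_eq]
  exact max_lt
    ((abs_gridCoord_sub_le hab.1 (hi' k) (hi' k')).trans_lt
      ((div_le_div_of_nonneg_right (le_max_left _ _) hN₀.le).trans_lt hmesh))
    ((abs_gridCoord_sub_le hab.2 (hj' k) (hj' k')).trans_lt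
      ((div_le_div_of_nonneg_right (le_max_right _ _) hN₀.le).trans_lt hmesh))

def spernerLabel (P Q : Prop) [Decidable P] [Decidable Q] : Fin 3 :=
  if P then 0 else if Q then 1 else 2

section spernerLabel

variable {P Q : Prop} [Decidable P] [Decidable Q]

lemma spernerLabel_eq_zero : spernerLabel P Q = 0 ↔ P := by
  unfold spernerLabel; split_ifs <;> simp_all

lemma spernerLabel_eq_one : spernerLabel P Q = 1 ↔ ¬P ∧ Q := by
  unfold spernerLabel; split_ifs <;> simp_all

lemma spernerLabel_eq_two : spernerLabel P Q = 2 ↔ ¬P ∧ ¬Q := by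
  unfold spernerLabel; split_ifs <;> simp_all

end spernerLabel

theorem exists_mem_Icc_norm_lt_of_boundary_signs {a b : ℝ × ℝ} (h₁ : a.1 < b.1)
    (h₂ : a.2 < b.2) {f : ℝ × ℝ → ℝ × ℝ} (hf : ContinuousOn f (Icc a b))
    (hleft : ∀ p ∈ Icc a b, p.1 = a.1 → 0 ≤ (f p).1)
    (hright : ∀ p ∈ Icc a b, p.1 = b.1 → (f p).1 ≤ 0)
    (hbot : ∀ p ∈ Icc a b, p.2 = a.2 → 0 ≤ (f p).2)
    (htop : ∀ p ∈ Icc a b, p.2 = b.2 → (f p).2 ≤ 0) {ε : ℝ} (hε : 0 < ε) :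
    ∃ p ∈ Icc a b, ‖f p‖ < ε := by
  classical
  obtain ⟨δ, hδ, hfδ⟩ := Metric.uniformContinuousOn_iff.1
    (isCompact_Icc.uniformContinuousOn_of_continuous hf) ε hε
  -- Breaking ties by position on the left and bottom edges lets the sign conditions be non-strict.
  let L : ℝ × ℝ → Fin 3 := fun p =>
    spernerLabel (0 < (f p).1 ∨ p.1 = a.1) (0 < (f p).2 ∨ p.2 = a.2)
  obtain ⟨p, hp⟩ := exists_fully_labelled_near ⟨h₁.le, h₂.le⟩ L
    (fun p _ hpa => spernerLabel_eq_zero.2 (Or.inr hpa))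
    (fun p hp hpb => mt spernerLabel_eq_zero.1
      (not_or.2 ⟨(hright p hp hpb).not_gt, hpb ▸ h₁.ne'⟩))
    (fun p _ hpa => mt spernerLabel_eq_two.1 fun h => h.2 (Or.inr hpa))
    (fun p hp hpb => mt spernerLabel_eq_one.1 fun h =>
      not_or.2 ⟨(htop p hp hpb).not_gt, hpb ▸ h₂.ne'⟩ h.2)
    hδ
  obtain ⟨hp₀, hL₀, -⟩ := hp 0
  obtain ⟨hp₁, hL₁, hd₁⟩ := hp 1
  obtain ⟨hp₂, hL₂, -⟩ := hp 2
  have hsign₀ : 0 ≤ (f (p 0)).1 := (spernerLabel_eq_zero.1 hL₀).elim le_of_lt (hleft _ hp₀)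
  have hsign₁ : (f (p 1)).1 ≤ 0 ∧ 0 ≤ (f (p 1)).2 :=
    ⟨not_lt.1 (not_or.1 (spernerLabel_eq_one.1 hL₁).1).1,
      (spernerLabel_eq_one.1 hL₁).2.elim le_of_lt (hbot _ hp₁)⟩
  have hsign₂ : (f (p 2)).2 ≤ 0 := not_lt.1 (not_or.1 (spernerLabel_eq_two.1 hL₂).2).1
  have hclose₀ := hfδ _ hp₁ _ hp₀ (hd₁ 0)
  have hclose₂ := hfδ _ hp₁ _ hp₂ (hd₁ 2)
  rw [Prod.dist_eq, Real.dist_eq, Real.dist_eq, max_lt_iff] at hclose₀ hclose₂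
  refine ⟨p 1, hp₁, max_lt ?_ ?_⟩
  · rw [Real.norm_eq_abs]; exact abs_lt.2 ⟨by linarith [abs_lt.1 hclose₀.1], by linarith⟩
  · rw [Real.norm_eq_abs]; exact abs_lt.2 ⟨by linarith, by linarith [abs_lt.1 hclose₂.2]⟩

theorem IsCompact.exists_eq_zero_of_forall_exists_norm_lt {X E : Type*} [TopologicalSpace X]
    [NormedAddCommGroup E] {s : Set X} (hs : IsCompact s) {f : X → E} (hf : ContinuousOn f s)
    (h : ∀ ε > 0, ∃ x ∈ s, ‖f x‖ < ε) : ∃ x ∈ s, f x = 0 := by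
  obtain ⟨x₀, hx₀, -⟩ := h 1 one_pos
  obtain ⟨x, hx, hmin⟩ := hs.exists_isMinOn ⟨x₀, hx₀⟩ (continuous_norm.comp_continuousOn hf)
  refine ⟨x, hx, norm_eq_zero.1 (le_antisymm (not_lt.1 fun hpos => ?_) (norm_nonneg _))⟩
  obtain ⟨y, hy, hlt⟩ := h _ hpos
  exact (hmin hy).not_gt hlt

theorem exists_mem_Icc_eq_zero_of_boundary_signs {a b : ℝ × ℝ} (h₁ : a.1 < b.1) (h₂ : a.2 < b.2)
    {f : ℝ × ℝ → ℝ × ℝ} (hf : ContinuousOn f (Icc a b))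
    (hleft : ∀ p ∈ Icc a b, p.1 = a.1 → 0 ≤ (f p).1)
    (hright : ∀ p ∈ Icc a b, p.1 = b.1 → (f p).1 ≤ 0)
    (hbot : ∀ p ∈ Icc a b, p.2 = a.2 → 0 ≤ (f p).2)
    (htop : ∀ p ∈ Icc a b, p.2 = b.2 → (f p).2 ≤ 0) :
    ∃ p ∈ Icc a b, f p = 0 :=
  isCompact_Icc.exists_eq_zero_of_forall_exists_norm_lt hf fun _ hε =>
    exists_mem_Icc_norm_lt_of_boundary_signs h₁ h₂ hf hleft hright hbot htop hε

theorem exists_mem_Icc_isFixedPt_of_mapsTo_prod {a b : ℝ × ℝ} (h₁ : a.1 < b.1) (h₂ : a.2 < b.2)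
    {φ : ℝ × ℝ → ℝ × ℝ} (hφ : ContinuousOn φ (Icc a b))
    (hmaps : MapsTo φ (Icc a b) (Icc a b)) :
    ∃ p ∈ Icc a b, Function.IsFixedPt φ p := by
  obtain ⟨p, hp, hzero⟩ := exists_mem_Icc_eq_zero_of_boundary_signs (f := fun p => φ p - p) h₁ h₂
    (hφ.sub continuousOn_id)
    (fun p hp hpa => sub_nonneg.2 (hpa ▸ (hmaps hp).1.1))
    (fun p hp hpb => sub_nonpos.2 (hpb ▸ (hmaps hp).2.1))
    (fun p hp hpa => sub_nonneg.2 (hpa ▸ (hmaps hp).1.2))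
    (fun p hp hpb => sub_nonpos.2 (hpb ▸ (hmaps hp).2.2))
  exact ⟨p, hp, sub_eq_zero.1 hzero⟩

lemma mem_Icc_neg_iff_abs_le {p : ℝ × ℝ} {A W : ℝ} :
    p ∈ Icc (-A, -W) (A, W) ↔ |p.1| ≤ A ∧ |p.2| ≤ W := by
  rw [Icc_prod_eq, mem_prod, mem_Icc, mem_Icc, abs_le, abs_le]

section matching

variable (n r F G : ℝ) (H H' : ℝ × ℝ → ℝ)

noncomputable def matchingMap (p : ℝ × ℝ) : ℝ × ℝ :=
  ((H' p + (n - 1) * H p) / ((G + (n - 1) * F) * r),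
    F * (H' p + (n - 1) * H p) / (G + (n - 1) * F) - H p)

variable {n r F G H H'}

theorem continuous_matchingMap (hH : Continuous H) (hH' : Continuous H') :
    Continuous (matchingMap n r F G H H') := by
  unfold matchingMap; fun_prop

theorem mapsTo_matchingMap {A W B B' : ℝ} (hn : 1 ≤ n) (hr : 0 < r) (hS : 0 < G + (n - 1) * F)
    (hHb : ∀ p ∈ Icc (-A, -W) (A, W), |H p| ≤ B) (hH'b : ∀ p ∈ Icc (-A, -W) (A, W), |H' p| ≤ B')
    (h1 : (B' + (n - 1) * B) / ((G + (n - 1) * F) * r) ≤ A)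
    (h2 : |F| * (B' + (n - 1) * B) / (G + (n - 1) * F) + B ≤ W) :
    MapsTo (matchingMap n r F G H H') (Icc (-A, -W) (A, W)) (Icc (-A, -W) (A, W)) := by
  intro p hp
  have hX : |H' p + (n - 1) * H p| ≤ B' + (n - 1) * B := by
    refine (abs_add_le _ _).trans ?_
    rw [abs_mul, abs_of_nonneg (sub_nonneg.2 hn)]
    exact add_le_add (hH'b p hp) (mul_le_mul_of_nonneg_left (hHb p hp) (sub_nonneg.2 hn))
  refine mem_Icc_neg_iff_abs_le.2 ⟨?_, ?_⟩
  · rw [matchingMap, abs_div, abs_of_pos (mul_pos hS hr)]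
    exact (div_le_div_of_nonneg_right hX (mul_pos hS hr).le).trans h1
  · calc |(matchingMap n r F G H H' p).2|
        ≤ |F| * |H' p + (n - 1) * H p| / (G + (n - 1) * F) + |H p| := by
          rw [matchingMap, ← abs_of_pos hS, ← abs_mul, ← abs_div, abs_of_pos hS]
          exact abs_sub _ _
      _ ≤ |F| * (B' + (n - 1) * B) / (G + (n - 1) * F) + B := by gcongr; exact hHb p hp
      _ ≤ W := h2

theorem isFixedPt_matchingMap_iff (hS : G + (n - 1) * F ≠ 0) (hr : r ≠ 0) {p : ℝ × ℝ} :
    Function.IsFixedPt (matchingMap n r F G H H') p ↔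
      F * r * p.1 - p.2 = H p ∧ G * r * p.1 - (1 - n) * p.2 = H' p := by
  rw [Function.IsFixedPt, matchingMap, Prod.ext_iff]
  dsimp only
  constructor
  · rintro ⟨e₁, e₂⟩
    rw [← e₁, ← e₂]
    constructor
    · field_simp
      ring
    · field_simp
      ring
  · rintro ⟨e₁, e₂⟩
    have hX : H' p + (n - 1) * H p = (G + (n - 1) * F) * r * p.1 := by
      linear_combination -(n - 1) * e₁ - e₂
    rw [hX]
    constructor
    · field_simp
    · rw [mul_comm F, mul_div_right_comm, mul_assoc, mul_div_cancel_left₀ _ hS]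
      linear_combination e₁

end matching

theorem stmt_19_general (n : ℕ) (hn : 2 ≤ n) (r : ℝ) (hr : 0 < r) (F G : ℝ)
    (hS : 0 < G + ((n : ℝ) - 1) * F)
    (A W B B' : ℝ) (hA : 0 < A) (hW : 0 < W)
    (H H' : ℝ × ℝ → ℝ) (hH : Continuous H) (hH' : Continuous H')
    (hHb : ∀ a ω : ℝ, |a| ≤ A → |ω| ≤ W → |H (a, ω)| ≤ B)
    (hH'b : ∀ a ω : ℝ, |a| ≤ A → |ω| ≤ W → |H' (a, ω)| ≤ B')
    (h1 : (B' + ((n : ℝ) - 1) * B) / ((G + ((n : ℝ) - 1) * F) * r) ≤ A)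
    (h2 : |F| * (B' + ((n : ℝ) - 1) * B) / (G + ((n : ℝ) - 1) * F) + B ≤ W) :
    ∃ a ω : ℝ, |a| ≤ A ∧ |ω| ≤ W ∧
      F * r * a - ω = H (a, ω) ∧ G * r * a - (1 - (n : ℝ)) * ω = H' (a, ω) := by
  have hD : ∀ p ∈ Icc (-A, -W) (A, W), |p.1| ≤ A ∧ |p.2| ≤ W := fun p hp =>
    mem_Icc_neg_iff_abs_le.1 hp
  have hn₁ : (1 : ℝ) ≤ n := by exact_mod_cast one_le_two.trans hn
  obtain ⟨p, hp, hfix⟩ := exists_mem_Icc_isFixedPt_of_mapsTo_prod (neg_lt_self hA)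
    (neg_lt_self hW) (continuous_matchingMap hH hH').continuousOn
    (mapsTo_matchingMap hn₁ hr hS (fun p hp => hHb p.1 p.2 (hD p hp).1 (hD p hp).2)
      (fun p hp => hH'b p.1 p.2 (hD p hp).1 (hD p hp).2) h1 h2)
  exact ⟨p.1, p.2, hD p hp |>.1, hD p hp |>.2, (isFixedPt_matchingMap_iff hS.ne' hr.ne').1 hfix⟩

theorem stmt_19 (n : ℕ) (hn : 2 ≤ n) (r : ℝ) (hr : 0 < r) (F G : ℝ)
    (hS : 0 < G + ((n : ℝ) - 1) * F)
    (A W B B' : ℝ) (hA : 0 < A) (hW : 0 < W) (hB : 0 < B) (hB' : 0 < B')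
    (H H' : ℝ × ℝ → ℝ) (hH : Continuous H) (hH' : Continuous H')
    (hHb : ∀ a ω : ℝ, |a| ≤ A → |ω| ≤ W → |H (a, ω)| ≤ B)
    (hH'b : ∀ a ω : ℝ, |a| ≤ A → |ω| ≤ W → |H' (a, ω)| ≤ B')
    (h1 : (B' + ((n : ℝ) - 1) * B) / ((G + ((n : ℝ) - 1) * F) * r) ≤ A)
    (h2 : |F| * (B' + ((n : ℝ) - 1) * B) / (G + ((n : ℝ) - 1) * F) + B ≤ W) :
    ∃ a ω : ℝ, |a| ≤ A ∧ |ω| ≤ W ∧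
      F * r * a - ω = H (a, ω) ∧ G * r * a - (1 - (n : ℝ)) * ω = H' (a, ω) :=
  stmt_19_general n hn r hr F G hS A W B B' hA hW H H' hH hH' hHb hH'b h1 h2
end
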